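/- arXiv:1003.2275 — 2 statements merged into one kernel-verified Lean document; each statement's English description precedes it below -/
import Mathlib

section
/- The identity ∫_{−1}^{1} ln|x − y| / √(1 − y²) dy = −π ln 2 holds for every x ∈ (−1, 1). -/
/-!
Substituting `y = cos θ` turns the integral into `∫₀^π log |cos φ - cos θ| dθ`, where `x = cos φ`.
The product formula `cos φ - cos θ = -2 sin ((φ + θ) / 2) sin ((φ - θ) / 2)` splits the logarithm
into `log 2` plus two sine terms; after halving `θ` these sweep out the two halves of the window
`[φ/2 - π/2, φ/2 + π/2]`, a full period of `log ∘ sin`, whose integral is `-π log 2`.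
Hence the total is `π log 2 + 2 (-π log 2) = -π log 2`.
-/

open Real MeasureTheory intervalIntegral Set Interval

theorem Real.log_sin_periodic : Function.Periodic (fun t => log (sin t)) π := fun t => by
  simp only [sin_add_pi, log_neg_eq_log]

theorem Real.integral_log_sin_add_pi (a : ℝ) : ∫ t in a..a + π, log (sin t) = -log 2 * π := by
  rw [log_sin_periodic.intervalIntegral_add_eq a 0, zero_add, integral_log_sin_zero_pi]

theorem Real.intervalIntegrable_log_sin_comp_analytic {f : ℝ → ℝ} (hf : ∀ x, AnalyticAt ℝ f x)
    {a b : ℝ} :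
    IntervalIntegrable (fun θ => log (sin (f θ))) volume a b :=
  (analyticOnNhd_sin.comp (fun x _ => hf x) (mapsTo_univ _ _)).meromorphicOn.intervalIntegrable_log

theorem Real.log_abs_cos_sub_cos {φ θ : ℝ} (h : cos φ ≠ cos θ) :
    log |cos φ - cos θ| = log 2 + log (sin ((φ + θ) / 2)) + log (sin ((φ - θ) / 2)) := by
  rw [← sub_ne_zero, cos_sub_cos] at h
  have h₁ := right_ne_zero_of_mul (left_ne_zero_of_mul h)
  rw [cos_sub_cos, log_abs, log_mul (left_ne_zero_of_mul h) (right_ne_zero_of_mul h), neg_mul,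
    log_neg_eq_log, log_mul two_ne_zero h₁]

theorem Real.integral_log_sin_half_add_add_log_sin_half_sub (φ : ℝ) :
    ∫ θ in 0..π, (log (sin ((φ + θ) / 2)) + log (sin ((φ - θ) / 2))) = 2 * (-log 2 * π) := by
  have hls (a b : ℝ) : IntervalIntegrable (fun t => log (sin t)) volume a b :=
    intervalIntegrable_log_sin
  have hadd : ∫ θ in 0..π, log (sin ((φ + θ) / 2))
      = 2 * ∫ t in φ / 2..φ / 2 + π / 2, log (sin t) := by
    simp_rw [add_div φ, add_comm (φ / 2)]
    rw [integral_comp_div_add (f := fun t => log (sin t)) two_ne_zero]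
    simp [add_comm]
  have hsub : ∫ θ in 0..π, log (sin ((φ - θ) / 2))
      = 2 * ∫ t in φ / 2 - π / 2..φ / 2, log (sin t) := by
    simp_rw [sub_div φ]
    rw [integral_comp_sub_div (f := fun t => log (sin t)) two_ne_zero]
    simp
  rw [integral_add (intervalIntegrable_log_sin_comp_analytic (by fun_prop))
    (intervalIntegrable_log_sin_comp_analytic (by fun_prop)), hadd, hsub, ← mul_add, add_comm,
    integral_add_adjacent_intervals (hls _ _) (hls _ _), ← integral_log_sin_add_pi (φ / 2 - π / 2)]
  ring_nf

theorem Real.ae_cos_ne_cos (φ : ℝ) : ∀ᵐ θ, θ ∈ Ι 0 π → cos φ ≠ cos θ := by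
  refine measure_mono_null (t := {θ ∈ Icc 0 π | cos θ = cos φ}) ?_ ?_
  · intro θ hθ
    simp only [uIoc_of_le pi_pos.le, mem_compl_iff, mem_ofPred_eq, Classical.not_imp,
      not_not] at hθ
    exact ⟨Ioc_subset_Icc_self hθ.1, hθ.2.symm⟩
  · exact Set.Subsingleton.measure_zero
      (fun a ha b hb => injOn_cos ha.1 hb.1 (ha.2.trans hb.2.symm)) _

theorem Real.integral_log_abs_cos_sub_cos (φ : ℝ) :
    ∫ θ in 0..π, log |cos φ - cos θ| = -(π * log 2) := by
  rw [integral_congr_ae ((ae_cos_ne_cos φ).mono fun θ h hθ => log_abs_cos_sub_cos (h hθ))]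
  simp_rw [add_assoc]
  rw [integral_add intervalIntegrable_const ((intervalIntegrable_log_sin_comp_analytic
    (by fun_prop)).add (intervalIntegrable_log_sin_comp_analytic (by fun_prop))),
    integral_log_sin_half_add_add_log_sin_half_sub, intervalIntegral.integral_const, smul_eq_mul]
  ring

theorem Real.cos_image_Ioo_zero_pi : cos '' Ioo 0 π = Ioo (-1) 1 := by
  simpa using cosPartialHomeomorph.image_source_eq_target

theorem Real.integral_div_sqrt_one_sub_sq (g : ℝ → ℝ) :
    ∫ y in Ioo (-1) 1, g y / √(1 - y ^ 2) = ∫ θ in 0..π, g (cos θ) := by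
  rw [← cos_image_Ioo_zero_pi, integral_image_eq_integral_abs_deriv_smul measurableSet_Ioo
      (fun θ _ => (hasDerivAt_cos θ).hasDerivWithinAt) (injOn_cos.mono Ioo_subset_Icc_self),
    integral_of_le pi_pos.le, integral_Ioc_eq_integral_Ioo]
  refine setIntegral_congr_fun measurableSet_Ioo fun θ hθ => ?_
  have hsin : 0 < sin θ := sin_pos_of_pos_of_lt_pi hθ.1 hθ.2
  rw [← sin_sq, sqrt_sq hsin.le, abs_neg, abs_of_pos hsin, smul_eq_mul, mul_div_cancel₀ _ hsin.ne']

/-- `∫_{-1}^{1} ln|x - y| / √(1 - y²) dy = -π ln 2` for every `x ∈ (-1,1)`. -/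
theorem stmt_3 (x : ℝ) (hx : x ∈ Set.Ioo (-1 : ℝ) 1) :
    ∫ y in Set.Ioo (-1 : ℝ) 1, Real.log |x - y| / Real.sqrt (1 - y ^ 2)
      = -(π * Real.log 2) := by
  obtain ⟨φ, rfl⟩ : ∃ φ, cos φ = x := ⟨arccos x, cos_arccos hx.1.le hx.2.le⟩
  rw [integral_div_sqrt_one_sub_sq (fun y => log |cos φ - y|), integral_log_abs_cos_sub_cos]
end

section
/- Let x : [−ε₀, ε₀] → ℝ² be a C² unit-speed curve. Then for ε small enough and s, t ∈ [−1,1], s ≠ t, the function ln(|x(εt) − x(εs)| / (ε|t − s|)) is bounded by Cε for a constant C independent of ε, s, t. -/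
/-!
Since `x` is `C²`, its unit tangent `x'` is Lipschitz near `0`, with some constant `K`. The
first-order Taylor estimate `‖x b - x a - (b - a) x'(a)‖ ≤ K |b - a|²` and `‖x'(a)‖ = 1` give
`|‖x b - x a‖ / |b - a| - 1| ≤ K |b - a|`, and `|b - a| = ε |t - s| ≤ 2ε`. Near `1` the
logarithm is Lipschitz, so the logarithm of the ratio is `O(ε)`.
-/

open Set NNReal

lemma abs_log_le_two_mul_of_abs_sub_one_le {r δ : ℝ} (h : |r - 1| ≤ δ) (hδ : δ ≤ 1 / 2) :
    |Real.log r| ≤ 2 * δ := by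
  obtain ⟨hlow, hup⟩ := abs_le.1 h
  have hr : 0 < r := by linarith
  refine abs_le.2 ⟨?_, by linarith [Real.log_le_sub_one_of_pos hr, abs_nonneg (r - 1)]⟩
  have hinv : r⁻¹ - 1 ≤ 2 * δ := by
    rw [inv_eq_one_div, div_sub_one hr.ne', div_le_iff₀ hr]
    nlinarith
  linarith [Real.log_le_sub_one_of_pos (inv_pos.2 hr), Real.log_inv r]

section UnitSpeedCurve

variable {E : Type*} [NormedAddCommGroup E] [NormedSpace ℝ E] {f f' : ℝ → E} {s : Set ℝ}
  {K : ℝ≥0} {a b : ℝ}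

theorem Convex.norm_sub_sub_smul_le_of_lipschitzOnWith (hs : Convex ℝ s)
    (hf : ∀ u ∈ s, HasDerivWithinAt f (f' u) s u) (hf' : LipschitzOnWith K f' s)
    (ha : a ∈ s) (hb : b ∈ s) :
    ‖f b - f a - (b - a) • f' a‖ ≤ K * |b - a| ^ 2 := by
  have hab : uIcc a b ⊆ s := by
    simpa only [segment_eq_uIcc] using hs.segment_subset ha hb
  have hderiv : ∀ u ∈ uIcc a b,
      HasDerivWithinAt (fun w ↦ f w - w • f' a) (f' u - f' a) (uIcc a b) u := fun u hu ↦ by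
    have := ((hf u (hab hu)).mono hab).sub
      ((hasDerivAt_id' (x := u)).hasDerivWithinAt.smul_const (f' a))
    rwa [one_smul] at this
  have hbound : ∀ u ∈ uIcc a b, ‖f' u - f' a‖ ≤ K * |b - a| := fun u hu ↦ by
    calc ‖f' u - f' a‖ ≤ K * |u - a| := by
          simpa only [← dist_eq_norm, Real.dist_eq] using hf'.dist_le_mul u (hab hu) a ha
      _ ≤ K * |b - a| := mul_le_mul_of_nonneg_left (abs_sub_left_of_mem_uIcc hu) K.2
  have := (convex_uIcc a b).norm_image_sub_le_of_norm_hasDerivWithin_le hderiv hbound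
    left_mem_uIcc right_mem_uIcc
  calc ‖f b - f a - (b - a) • f' a‖ = ‖(f b - b • f' a) - (f a - a • f' a)‖ := by
        rw [sub_smul]; congr 1; abel
    _ ≤ K * |b - a| * ‖b - a‖ := this
    _ = K * |b - a| ^ 2 := by rw [Real.norm_eq_abs]; ring

theorem Convex.abs_norm_sub_div_sub_one_le_of_lipschitzOnWith (hs : Convex ℝ s)
    (hf : ∀ u ∈ s, HasDerivWithinAt f (f' u) s u) (hf' : LipschitzOnWith K f' s)
    (hunit : ‖f' a‖ = 1) (ha : a ∈ s) (hb : b ∈ s) (hab : a ≠ b) :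
    |‖f b - f a‖ / |b - a| - 1| ≤ K * |b - a| := by
  have hd : 0 < |b - a| := abs_pos.2 (sub_ne_zero.2 hab.symm)
  have hnorm : ‖(b - a) • f' a‖ = |b - a| := by rw [norm_smul, hunit, mul_one, Real.norm_eq_abs]
  have hdiff : |‖f b - f a‖ - ‖(b - a) • f' a‖| ≤ K * |b - a| ^ 2 :=
    (abs_norm_sub_norm_le _ _).trans (hs.norm_sub_sub_smul_le_of_lipschitzOnWith hf hf' ha hb)
  rw [hnorm] at hdiff
  rw [div_sub_one hd.ne', abs_div, abs_of_pos hd, div_le_iff₀ hd]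
  nlinarith

theorem ContDiffOn.exists_lipschitzOnWith_deriv {x : ℝ → E} {a b c d : ℝ}
    (hx : ContDiffOn ℝ 2 x (Icc a b)) (hac : a < c) (hdb : d < b) :
    (∀ u ∈ Icc c d, HasDerivWithinAt x (deriv x u) (Icc c d) u) ∧
      ∃ K, LipschitzOnWith K (deriv x) (Icc c d) := by
  have hsub : Icc c d ⊆ Ioo a b := Icc_subset_Ioo hac hdb
  have hxU : ContDiffOn ℝ 2 x (Ioo a b) := hx.mono Ioo_subset_Icc_self
  refine ⟨fun u hu ↦ ?_, ?_⟩
  · exact ((hxU.differentiableOn two_ne_zero u (hsub hu)).differentiableAt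
      (isOpen_Ioo.mem_nhds (hsub hu))).hasDerivAt.hasDerivWithinAt
  · exact ((hxU.deriv_of_isOpen isOpen_Ioo le_rfl).mono hsub).exists_lipschitzOnWith
      one_ne_zero (convex_Icc _ _) isCompact_Icc

end UnitSpeedCurve

/-- For a `C²` unit-speed curve `x : [-ε₀, ε₀] → ℝ²`, for `ε` small enough and
`s ≠ t` in `[-1,1]`, `|ln(‖x(εt) - x(εs)‖ / (ε|t-s|))| ≤ Cε` with `C`
independent of `ε, s, t`. -/
theorem stmt_7 (ε₀ : ℝ) (hε₀ : 0 < ε₀) (x : ℝ → EuclideanSpace ℝ (Fin 2))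
    (hx : ContDiffOn ℝ 2 x (Set.Icc (-ε₀) ε₀))
    (hspeed : ∀ t ∈ Set.Icc (-ε₀) ε₀, ‖deriv x t‖ = 1) :
    ∃ C > (0 : ℝ), ∃ ε₁ > (0 : ℝ), ε₁ ≤ ε₀ ∧
      ∀ ε : ℝ, 0 < ε → ε ≤ ε₁ →
        ∀ s ∈ Set.Icc (-1 : ℝ) 1, ∀ t ∈ Set.Icc (-1 : ℝ) 1, s ≠ t →
          |Real.log (‖x (ε * t) - x (ε * s)‖ / (ε * |t - s|))| ≤ C * ε := by
  obtain ⟨hderiv, K, hK⟩ :=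
    hx.exists_lipschitzOnWith_deriv (c := -(ε₀ / 2)) (d := ε₀ / 2) (by linarith) (by linarith)
  refine ⟨4 * (K + 1), by positivity, min (ε₀ / 2) (1 / (4 * (K + 1))), by positivity,
    (min_le_left _ _).trans (by linarith), ?_⟩
  intro ε hε hε₁ s hs t ht hst
  have hεJ : ε ≤ ε₀ / 2 := hε₁.trans (min_le_left _ _)
  have hεK : ε * (4 * (K + 1)) ≤ 1 := (le_div_iff₀ (by positivity)).1
    (hε₁.trans (min_le_right _ _))
  have hmem : ∀ r ∈ Icc (-1 : ℝ) 1, ε * r ∈ Icc (-(ε₀ / 2)) (ε₀ / 2) := fun r ⟨h₁, h₂⟩ ↦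
    ⟨by nlinarith, by nlinarith⟩
  have hgap : |ε * t - ε * s| = ε * |t - s| := by rw [← mul_sub, abs_mul, abs_of_pos hε]
  have hgap_le : ε * |t - s| ≤ 2 * ε := by
    have : |t - s| ≤ 2 := abs_le.2 ⟨by linarith [hs.2, ht.1], by linarith [hs.1, ht.2]⟩
    nlinarith
  have hratio := (convex_Icc _ _).abs_norm_sub_div_sub_one_le_of_lipschitzOnWith hderiv hK
    (hspeed _ (Icc_subset_Icc (by linarith) (by linarith) (hmem s hs)))
    (hmem s hs) (hmem t ht) (by simpa [hε.ne'] using hst)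
  rw [hgap] at hratio
  have hK_le : (K : ℝ) * (ε * |t - s|) ≤ (K + 1) * (2 * ε) := by gcongr; linarith
  calc _ ≤ 2 * (K * (ε * |t - s|)) := abs_log_le_two_mul_of_abs_sub_one_le hratio (by nlinarith)
    _ ≤ 4 * (K + 1) * ε := by linarith
end
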